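/- Define I_L(ℰ) := (√2/π) ∫_{φ=−arccos(ℰ)}^{arccos(ℰ)} √(cos φ − ℰ) dφ for −1 < ℰ < 1, and I_R(ℰ) := (1/(√2·π)) ∫_{φ=−π}^{π} √(cos φ − ℰ) dφ for ℰ < −1. Then the second derivative of I_L is strictly positive at every ℰ ∈ (−1,1), while the second derivative of I_R is strictly negative at every ℰ ∈ (−∞,−1). -/

import Mathlib

open MeasureTheory Real

/-- The librational averaged action integral
`I_L(ℰ) = (√2/π) ∫_{−arccos ℰ}^{arccos ℰ} √(cos φ − ℰ) dφ`, for `−1 < ℰ < 1`. -/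
noncomputable def I_L (E : ℝ) : ℝ :=
  (Real.sqrt 2 / Real.pi) *
    ∫ φ in (-(Real.arccos E))..(Real.arccos E), Real.sqrt (Real.cos φ - E)

/-- The rotational averaged action integral
`I_R(ℰ) = (1/(√2 π)) ∫_{−π}^{π} √(cos φ − ℰ) dφ`, for `ℰ < −1`. -/
noncomputable def I_R (E : ℝ) : ℝ :=
  (1 / (Real.sqrt 2 * Real.pi)) *
    ∫ φ in (-Real.pi)..Real.pi, Real.sqrt (Real.cos φ - E)

/-!
For `ℰ < -1` the base `cos φ - ℰ` stays away from `0`, so `I_R` can be differentiated twice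
under the integral sign: `I_R'' = -(1 / (4√2 π)) ∫ (cos φ - ℰ)^(-3/2) dφ < 0`.

For `-1 < ℰ < 1` the endpoints `±arccos ℰ` move with `ℰ` and the integrand vanishes there like
a square root. With `m = k² = (1 - ℰ)/2`, the substitution `φ = 2 arcsin (k sin θ)` gives
`I_L = (4/π) m ∫_{-π/2}^{π/2} cos²θ (1 - m sin²θ)^(-1/2) dθ`, an integral over a fixed
interval with a smooth integrand. Differentiating it twice in `m` gives `I_L''` as a positive
combination of integrals of nonnegative functions that are not identically zero.
-/

open intervalIntegral Set Filter Topology Metric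

theorem hasDerivAt_integral_mul_rpow_sub_mul {c a b : ℝ → ℝ} {U : Set ℝ} {α β p x₀ : ℝ}
    (hc : Continuous c) (ha : Continuous a) (hb : Continuous b) (hU : IsOpen U)
    (hpos : ∀ x ∈ U, ∀ θ, 0 < a θ - x * b θ) (hx₀ : x₀ ∈ U) :
    HasDerivAt (fun x => ∫ θ in α..β, c θ * (a θ - x * b θ) ^ p)
      (-p * ∫ θ in α..β, c θ * b θ * (a θ - x₀ * b θ) ^ (p - 1)) x₀ := by
  obtain ⟨ε, hε, hεU⟩ := nhds_basis_closedBall.mem_iff.1 (hU.mem_nhds hx₀)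
  set F' : ℝ → ℝ → ℝ := fun x θ => -p * (c θ * b θ * (a θ - x * b θ) ^ (p - 1))
  have hF'_cont : ContinuousOn (fun z : ℝ × ℝ => F' z.1 z.2) (U ×ˢ univ) :=
    continuousOn_const.mul
      (((hc.comp continuous_snd).mul (hb.comp continuous_snd)).continuousOn.mul
        (ContinuousOn.rpow_const (by fun_prop) fun z hz => Or.inl (hpos z.1 hz.1 z.2).ne'))
  obtain ⟨C, hC⟩ := ((isCompact_closedBall x₀ ε).prod (isCompact_uIcc (a := α) (b := β)))
    |>.exists_bound_of_continuousOn (hF'_cont.mono (prod_mono hεU (subset_univ _)))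
  have hF_cont (x : ℝ) (hx : x ∈ U) : Continuous fun θ => c θ * (a θ - x * b θ) ^ p :=
    hc.mul ((ha.sub (continuous_const.mul hb)).rpow_const fun θ => Or.inl (hpos x hx θ).ne')
  have hF_deriv (x : ℝ) (hx : x ∈ U) (θ : ℝ) :
      HasDerivAt (fun y => c θ * (a θ - y * b θ) ^ p) (F' x θ) x := by
    have h := ((hasDerivAt_mul_const (b θ)).const_sub (a θ)).rpow_const (p := p)
      (Or.inl (hpos x hx θ).ne')
    exact (h.const_mul (c θ)).congr_deriv (by ring)
  rw [← intervalIntegral.integral_const_mul]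
  refine (hasDerivAt_integral_of_dominated_loc_of_deriv_le (F' := F') (bound := fun _ => C)
    (closedBall_mem_nhds x₀ hε) ?_ ?_ ?_ ?_ intervalIntegrable_const ?_).2
  · filter_upwards [hU.mem_nhds hx₀] with x hx using (hF_cont x hx).aestronglyMeasurable
  · exact (hF_cont x₀ hx₀).intervalIntegrable _ _
  · exact (hF'_cont.comp_continuous (Continuous.prodMk_right x₀)
      fun _ => ⟨hx₀, trivial⟩).aestronglyMeasurable
  · exact .of_forall fun θ hθ x hx => hC (x, θ) ⟨hx, uIoc_subset_uIcc hθ⟩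
  · exact .of_forall fun θ _ x hx => hF_deriv x (hεU hx) θ

theorem deriv_deriv_eq_of_hasDerivAt {f f' : ℝ → ℝ} {x f'' : ℝ}
    (hf : ∀ᶠ y in 𝓝 x, HasDerivAt f (f' y) y) (hf' : HasDerivAt f' f'' x) :
    deriv (deriv f) x = f'' :=
  (show deriv f =ᶠ[𝓝 x] f' from hf.mono fun _ hy => hy.deriv).deriv_eq.trans hf'.deriv

noncomputable def ellipticMoment (n : ℕ) (p m : ℝ) : ℝ :=
  ∫ θ in -(π / 2)..π / 2, cos θ ^ 2 * sin θ ^ (2 * n) * (1 - m * sin θ ^ 2) ^ p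

theorem one_sub_mul_sin_sq_pos {m : ℝ} (hm : m < 1) (θ : ℝ) : 0 < 1 - m * sin θ ^ 2 := by
  rcases le_or_gt m 0 with h | h <;> nlinarith [sin_sq_le_one θ, sq_nonneg (sin θ)]

theorem hasDerivAt_ellipticMoment (n : ℕ) (p : ℝ) {m : ℝ} (hm : m < 1) :
    HasDerivAt (ellipticMoment n p) (-p * ellipticMoment (n + 1) (p - 1) m) m := by
  have h := hasDerivAt_integral_mul_rpow_sub_mul (α := -(π / 2)) (β := π / 2) (p := p)
    (c := fun θ => cos θ ^ 2 * sin θ ^ (2 * n)) (a := fun _ => 1) (b := fun θ => sin θ ^ 2)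
    (by fun_prop) (by fun_prop) (by fun_prop) isOpen_Iio
    (fun x hx θ => one_sub_mul_sin_sq_pos hx θ) hm
  exact h.congr_deriv (congrArg _ (integral_congr fun θ _ => by ring))

theorem ellipticMoment_pos (n : ℕ) (p : ℝ) {m : ℝ} (hm : m < 1) :
    0 < ellipticMoment n p m := by
  have hcont : Continuous fun θ => cos θ ^ 2 * sin θ ^ (2 * n) * (1 - m * sin θ ^ 2) ^ p :=
    (by fun_prop : Continuous fun θ => cos θ ^ 2 * sin θ ^ (2 * n)).mul
      ((by fun_prop : Continuous fun θ => 1 - m * sin θ ^ 2).rpow_const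
        fun θ => Or.inl (one_sub_mul_sin_sq_pos hm θ).ne')
  have hpos (θ : ℝ) (hcos : 0 < cos θ) (hsin : sin θ ≠ 0) :
      0 < cos θ ^ 2 * sin θ ^ (2 * n) * (1 - m * sin θ ^ 2) ^ p := by
    have := rpow_pos_of_pos (one_sub_mul_sin_sq_pos hm θ) p
    rw [pow_mul]
    positivity
  rw [ellipticMoment, ← integral_add_adjacent_intervals (b := 0) (hcont.intervalIntegrable _ _)
    (hcont.intervalIntegrable _ _)]
  have hπ := pi_pos
  refine add_pos (intervalIntegral_pos_of_pos_on (hcont.intervalIntegrable _ _) ?_ (by linarith))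
    (intervalIntegral_pos_of_pos_on (hcont.intervalIntegrable _ _) ?_ (by linarith))
  · rintro θ ⟨hθ₁, hθ₂⟩
    exact hpos θ (cos_pos_of_mem_Ioo ⟨hθ₁, by linarith⟩)
      (sin_neg_of_neg_of_neg_pi_lt hθ₂ (by linarith)).ne
  · rintro θ ⟨hθ₁, hθ₂⟩
    exact hpos θ (cos_pos_of_mem_Ioo ⟨by linarith, hθ₂⟩)
      (sin_pos_of_pos_of_lt_pi hθ₁ (by linarith)).ne'

noncomputable def rotationalIntegral (p E : ℝ) : ℝ :=
  ∫ φ in -π..π, (cos φ - E) ^ p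

theorem cos_sub_pos_of_lt_neg_one {E : ℝ} (hE : E < -1) (φ : ℝ) : 0 < cos φ - E := by
  linarith [neg_one_le_cos φ]

theorem hasDerivAt_rotationalIntegral (p : ℝ) {E : ℝ} (hE : E < -1) :
    HasDerivAt (rotationalIntegral p) (-p * rotationalIntegral (p - 1) E) E := by
  have h := hasDerivAt_integral_mul_rpow_sub_mul (α := -π) (β := π) (p := p)
    (c := fun _ => 1) (a := cos) (b := fun _ => 1) (by fun_prop) (by fun_prop) (by fun_prop)
    isOpen_Iio (fun x hx φ => by simpa only [mul_one] using cos_sub_pos_of_lt_neg_one hx φ) hE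
  simp only [one_mul, mul_one] at h
  exact h

theorem rotationalIntegral_pos (p : ℝ) {E : ℝ} (hE : E < -1) : 0 < rotationalIntegral p E := by
  have hcont : Continuous fun φ => (cos φ - E) ^ p :=
    (continuous_cos.sub continuous_const).rpow_const
      fun φ => Or.inl (cos_sub_pos_of_lt_neg_one hE φ).ne'
  exact intervalIntegral_pos_of_pos (hcont.intervalIntegrable _ _)
    (fun φ => rpow_pos_of_pos (cos_sub_pos_of_lt_neg_one hE φ) p) (by linarith [pi_pos])

theorem cos_two_mul_arcsin {y : ℝ} (h₁ : -1 ≤ y) (h₂ : y ≤ 1) :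
    cos (2 * arcsin y) = 1 - 2 * y ^ 2 := by
  rw [cos_two_mul, cos_arcsin, sq_sqrt (by nlinarith)]
  ring

theorem arccos_one_sub_two_mul_sq {k : ℝ} (h₀ : 0 ≤ k) (h₁ : k ≤ 1) :
    arccos (1 - 2 * k ^ 2) = 2 * arcsin k := by
  rw [← cos_two_mul_arcsin (by linarith) h₁,
    arccos_cos (by linarith [arcsin_nonneg.2 h₀]) (by linarith [arcsin_le_pi_div_two k])]

theorem hasDerivAt_two_mul_arcsin_mul_sin {k : ℝ} (hk : |k| < 1) (θ : ℝ) :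
    HasDerivAt (fun θ => 2 * arcsin (k * sin θ))
      (2 * k * cos θ * (1 - k ^ 2 * sin θ ^ 2) ^ (-(1 / 2) : ℝ)) θ := by
  have hlt : |k * sin θ| < 1 := by
    rw [abs_mul]
    nlinarith [abs_sin_le_one θ, abs_nonneg k, abs_nonneg (sin θ)]
  have h := ((hasDerivAt_arcsin (abs_lt.1 hlt).1.ne' (abs_lt.1 hlt).2.ne).comp θ
    ((hasDerivAt_sin θ).const_mul k)).const_mul 2
  refine h.congr_deriv ?_
  rw [rpow_neg (by nlinarith [sq_abs (k * sin θ), abs_nonneg (k * sin θ)]), ← sqrt_eq_rpow,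
    mul_pow]
  ring

/-- The substitution `φ = 2 arcsin (k sin θ)` turns `√(cos φ - (1 - 2k²))` into
`√2 k cos θ` and removes the square-root singularities at the endpoints. -/
theorem integral_sqrt_cos_sub_eq_ellipticMoment {k : ℝ} (hk₀ : 0 ≤ k) (hk₁ : k < 1) :
    ∫ φ in -arccos (1 - 2 * k ^ 2)..arccos (1 - 2 * k ^ 2), √(cos φ - (1 - 2 * k ^ 2)) =
      2 * √2 * k ^ 2 * ellipticMoment 0 (-(1 / 2)) (k ^ 2) := by
  have hk : |k| < 1 := by rwa [abs_of_nonneg hk₀]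
  have hk2 : k ^ 2 < 1 := by nlinarith
  have h_upper : 2 * arcsin (k * sin (π / 2)) = arccos (1 - 2 * k ^ 2) := by
    simp only [sin_pi_div_two, mul_one, arccos_one_sub_two_mul_sq hk₀ hk₁.le]
  have h_lower : 2 * arcsin (k * sin (-(π / 2))) = -arccos (1 - 2 * k ^ 2) := by
    rw [← h_upper]
    simp only [sin_neg, mul_neg, arcsin_neg]
  have hsubst := integral_comp_mul_deriv (a := -(π / 2)) (b := π / 2)
    (fun θ _ => hasDerivAt_two_mul_arcsin_mul_sin hk θ)
    ((by fun_prop : Continuous fun θ => 2 * k * cos θ).mul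
      ((by fun_prop : Continuous fun θ => 1 - k ^ 2 * sin θ ^ 2).rpow_const
        fun θ => Or.inl (one_sub_mul_sin_sq_pos hk2 θ).ne')).continuousOn
    (by fun_prop : Continuous fun φ => √(cos φ - (1 - 2 * k ^ 2)))
  rw [h_lower, h_upper] at hsubst
  rw [← hsubst, ellipticMoment, ← intervalIntegral.integral_const_mul]
  refine integral_congr fun θ hθ => ?_
  rw [uIcc_of_le (by linarith [pi_pos])] at hθ
  have hcos : 0 ≤ k * cos θ := mul_nonneg hk₀ (cos_nonneg_of_mem_Icc hθ)
  have harg : cos (2 * arcsin (k * sin θ)) - (1 - 2 * k ^ 2) = 2 * (k * cos θ) ^ 2 := by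
    rw [cos_two_mul_arcsin (by nlinarith [neg_one_le_sin θ]) (by nlinarith [sin_le_one θ])]
    linear_combination -2 * k ^ 2 * sin_sq_add_cos_sq θ
  simp only [Function.comp, harg, sqrt_mul zero_le_two, sqrt_sq hcos]
  ring

theorem I_L_eq_mul_ellipticMoment {E : ℝ} (h₁ : -1 < E) (h₂ : E < 1) :
    I_L E = 4 / π * ((1 - E) / 2 * ellipticMoment 0 (-(1 / 2)) ((1 - E) / 2)) := by
  obtain ⟨k, hk₀, hk₁, rfl⟩ : ∃ k, 0 ≤ k ∧ k < 1 ∧ E = 1 - 2 * k ^ 2 :=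
    ⟨√((1 - E) / 2), sqrt_nonneg _, (sqrt_lt' one_pos).2 (by linarith),
      by rw [sq_sqrt (by linarith)]; ring⟩
  rw [I_L, integral_sqrt_cos_sub_eq_ellipticMoment hk₀ hk₁,
    show (1 - (1 - 2 * k ^ 2)) / 2 = k ^ 2 by ring]
  have h2 : √2 * √2 = 2 := mul_self_sqrt zero_le_two
  field_simp
  linear_combination 2 * k ^ 2 * ellipticMoment 0 (-(1 / 2)) (k ^ 2) * h2

theorem hasDerivAt_one_sub_div_two (x : ℝ) :
    HasDerivAt (fun y : ℝ => (1 - y) / 2) (-(1 / 2)) x :=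
  (((hasDerivAt_id x).const_sub 1).div_const 2).congr_deriv (by ring)

theorem deriv_deriv_I_L {E : ℝ} (h₁ : -1 < E) (h₂ : E < 1) :
    deriv (deriv I_L) E = 1 / π * (ellipticMoment 1 (-(3 / 2)) ((1 - E) / 2) +
      3 / 4 * ((1 - E) / 2) * ellipticMoment 2 (-(5 / 2)) ((1 - E) / 2)) := by
  have hM₀ (m : ℝ) (hm : m < 1) :
      HasDerivAt (ellipticMoment 0 (-(1 / 2))) (1 / 2 * ellipticMoment 1 (-(3 / 2)) m) m := by
    convert hasDerivAt_ellipticMoment 0 (-(1 / 2)) hm using 2 <;> norm_num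
  have hM₁ (m : ℝ) (hm : m < 1) :
      HasDerivAt (ellipticMoment 1 (-(3 / 2))) (3 / 2 * ellipticMoment 2 (-(5 / 2)) m) m := by
    convert hasDerivAt_ellipticMoment 1 (-(3 / 2)) hm using 2 <;> norm_num
  set g' : ℝ → ℝ := fun m =>
    ellipticMoment 0 (-(1 / 2)) m + m * (1 / 2 * ellipticMoment 1 (-(3 / 2)) m)
  have hg (m : ℝ) (hm : m < 1) :
      HasDerivAt (fun m => m * ellipticMoment 0 (-(1 / 2)) m) (g' m) m :=
    ((hasDerivAt_id m).mul (hM₀ m hm)).congr_deriv (by simp [g'])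
  have hg' (m : ℝ) (hm : m < 1) : HasDerivAt g'
      (ellipticMoment 1 (-(3 / 2)) m + 3 / 4 * m * ellipticMoment 2 (-(5 / 2)) m) m :=
    (((hM₀ m hm).add ((hasDerivAt_id m).mul ((hM₁ m hm).const_mul (1 / 2))))).congr_deriv
      (by simp only [id]; ring)
  refine deriv_deriv_eq_of_hasDerivAt (f' := fun y => -(2 / π) * g' ((1 - y) / 2)) ?_ ?_
  · filter_upwards [Ioo_mem_nhds h₁ h₂] with y ⟨hy₁, hy₂⟩
    have hI_L : (fun z => 4 / π * ((1 - z) / 2 * ellipticMoment 0 (-(1 / 2)) ((1 - z) / 2)))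
        =ᶠ[𝓝 y] I_L := by
      filter_upwards [Ioo_mem_nhds hy₁ hy₂] with z ⟨hz₁, hz₂⟩
      exact (I_L_eq_mul_ellipticMoment hz₁ hz₂).symm
    refine ((((hg _ (by linarith)).comp y (hasDerivAt_one_sub_div_two y)).const_mul
      (4 / π)).congr_of_eventuallyEq hI_L.symm).congr_deriv ?_
    ring
  · refine (((hg' _ (by linarith)).comp E (hasDerivAt_one_sub_div_two E)).const_mul
      (-(2 / π))).congr_deriv ?_
    ring

theorem I_R_eq_rotationalIntegral :
    I_R = fun E => 1 / (√2 * π) * rotationalIntegral (1 / 2) E := by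
  ext E
  simp only [I_R, rotationalIntegral, sqrt_eq_rpow]

theorem deriv_deriv_I_R {E : ℝ} (hE : E < -1) :
    deriv (deriv I_R) E = -(1 / (4 * (√2 * π))) * rotationalIntegral (-(3 / 2)) E := by
  refine deriv_deriv_eq_of_hasDerivAt
    (f' := fun x => 1 / (√2 * π) * (-(1 / 2) * rotationalIntegral (-(1 / 2)) x)) ?_ ?_
  · filter_upwards [Iio_mem_nhds hE] with x hx
    rw [I_R_eq_rotationalIntegral]
    exact ((hasDerivAt_rotationalIntegral (1 / 2) hx).const_mul _).congr_deriv (by norm_num)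
  · refine (((hasDerivAt_rotationalIntegral (-(1 / 2)) hE).const_mul (-(1 / 2))).const_mul
      (1 / (√2 * π))).congr_deriv ?_
    rw [show -(1 / 2) - 1 = -(3 / 2 : ℝ) by norm_num]
    ring

/-- **Convexity/concavity of the averaged action integrals.**
The second derivative of `I_L` is strictly positive on `(−1,1)`, while the second
derivative of `I_R` is strictly negative on `(−∞,−1)`. -/
theorem I_L_convex_I_R_concave :
    (∀ E : ℝ, -1 < E → E < 1 → 0 < deriv (deriv I_L) E) ∧
    (∀ E : ℝ, E < -1 → deriv (deriv I_R) E < 0) := by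
  refine ⟨fun E h₁ h₂ => ?_, fun E hE => ?_⟩
  · have hm : (1 - E) / 2 < 1 := by linarith
    rw [deriv_deriv_I_L h₁ h₂]
    have := ellipticMoment_pos 1 (-(3 / 2)) hm
    have := ellipticMoment_pos 2 (-(5 / 2)) hm
    have : 0 < (1 - E) / 2 := by linarith
    have := pi_pos
    positivity
  · rw [deriv_deriv_I_R hE]
    have := pi_pos
    exact mul_neg_of_neg_of_pos (neg_neg_of_pos (by positivity)) (rotationalIntegral_pos _ hE)
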